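/- In every strongly paratopological gyrogroup G, there exists a local base at the identity consisting of ω-good sets; i.e., for every neighborhood U of 0 there is an open set V with 0 ∈ V ⊆ U and a countable family γ of open neighborhoods of 0 such that for each x ∈ V there exists W ∈ γ with x⊕W ⊆ V. -/

import Mathlib

open Pointwise

/-- A gyrogroup: a groupoid with identity, inverses, gyroautomorphisms satisfying
the left gyroassociative law and the left loop property. -/
class Gyrogroup (G : Type*) extends Zero G, Neg G, Add G where
  zero_add : ∀ a : G, 0 + a = a
  add_zero : ∀ a : G, a + 0 = a
  neg_add_cancel : ∀ a : G, -a + a = 0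
  add_neg_cancel : ∀ a : G, a + -a = 0
  gyr : G → G → G → G
  gyr_bijective : ∀ a b : G, Function.Bijective (gyr a b)
  gyr_add : ∀ a b x y : G, gyr a b (x + y) = gyr a b x + gyr a b y
  gyrassoc : ∀ a b c : G, a + (b + c) = a + b + gyr a b c
  loop : ∀ a b : G, gyr (a + b) b = gyr a b

/-! Halve a basic neighbourhood `U₀` repeatedly to get `U₀ ⊇ U₁ + U₁`, `U₁ ⊇ U₂ + U₂`, …, all
gyr-invariant. The sets `Vₙ = U₁ + U₂ + ⋯ + Uₙ₊₁` increase, and gyr-invariance lets the sums be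
reassociated, so `Vₙ + Uₙ₊₁ ⊆ U₀` collapses from the right. Their union `V` is open, lies in `U₀`,
and every `x ∈ Vₙ` has `x + Uₙ₊₂ ⊆ Vₙ₊₁ ⊆ V`, so the countable family `{Uₙ}` witnesses that `V` is
ω-good. -/

def IsOmegaGood {G : Type*} [Add G] [Zero G] [TopologicalSpace G] (V : Set G) : Prop :=
  ∃ γ : Set (Set G), γ.Countable ∧ (∀ W ∈ γ, IsOpen W ∧ (0 : G) ∈ W) ∧
    ∀ x ∈ V, ∃ W ∈ γ, {x} + W ⊆ V

theorem Filter.HasBasis.exists_seq_add_self_subset {M : Type*} [AddZeroClass M]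
    [TopologicalSpace M] [ContinuousAdd M] {𝒰 : Set (Set M)}
    (hb : (nhds (0 : M)).HasBasis (· ∈ 𝒰) id) {U : Set M} (hU : U ∈ 𝒰) :
    ∃ u : ℕ → Set M, u 0 = U ∧ (∀ n, u n ∈ 𝒰) ∧ ∀ n, u (n + 1) + u (n + 1) ⊆ u n := by
  have hhalf (A : Set M) (hA : A ∈ 𝒰) : ∃ B ∈ 𝒰, B + B ⊆ A :=
    hb.add_self.mem_iff.mp (hb.mem_of_mem hA)
  choose! half hmem hsub using hhalf
  have hiter (n : ℕ) : half^[n] U ∈ 𝒰 := by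
    induction n with
    | zero => exact hU
    | succ n ih => exact Function.iterate_succ_apply' half n U ▸ hmem _ ih
  refine ⟨fun n => half^[n] U, rfl, hiter, fun n => ?_⟩
  show half^[n + 1] U + half^[n + 1] U ⊆ half^[n] U
  rw [Function.iterate_succ_apply']
  exact hsub _ (hiter n)

namespace Gyrogroup

variable {G : Type*} [Gyrogroup G]

theorem add_add_eq_gyr_zero_of_add_eq_zero {a b : G} (h : a + b = 0) (c : G) :
    a + (b + c) = gyr 0 b c := by
  rw [gyrassoc, h, zero_add, ← loop a b, h]

theorem add_left_injective (a : G) : Function.Injective (a + ·) := fun b c h => by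
  simpa only [add_add_eq_gyr_zero_of_add_eq_zero (neg_add_cancel a),
    (gyr_bijective 0 a).injective.eq_iff] using congrArg (-a + ·) h

theorem gyr_zero_left (a b : G) : gyr 0 a b = b := by
  refine (add_left_injective a ?_).symm
  simpa only [zero_add] using gyrassoc 0 a b

theorem add_add_cancel_of_add_eq_zero {a b : G} (h : a + b = 0) (c : G) : a + (b + c) = c := by
  rw [add_add_eq_gyr_zero_of_add_eq_zero h, gyr_zero_left]

theorem neg_add_cancel_left (a b : G) : -a + (a + b) = b :=
  add_add_cancel_of_add_eq_zero (neg_add_cancel a) b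

theorem add_neg_cancel_left (a b : G) : a + (-a + b) = b :=
  add_add_cancel_of_add_eq_zero (add_neg_cancel a) b

instance toAddZeroClass : AddZeroClass G where
  zero_add := zero_add
  add_zero := add_zero

theorem add_add_assoc_of_gyr_image_eq {s t u : Set G} (hu : ∀ a b : G, gyr a b '' u = u) :
    s + t + u = s + (t + u) := by
  ext x
  simp only [Set.mem_add]
  constructor
  · rintro ⟨_, ⟨a, ha, b, hb, rfl⟩, c, hc, rfl⟩
    obtain ⟨c', hc', rfl⟩ : c ∈ gyr a b '' u := (hu a b).symm ▸ hc
    exact ⟨a, ha, b + c', ⟨b, hb, c', hc', rfl⟩, gyrassoc a b c'⟩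
  · rintro ⟨a, ha, _, ⟨b, hb, c, hc, rfl⟩, rfl⟩
    exact ⟨a + b, ⟨a, ha, b, hb, rfl⟩, gyr a b c, (hu a b) ▸ ⟨c, hc, rfl⟩, (gyrassoc a b c).symm⟩

theorem isOpen_add_left [TopologicalSpace G] [ContinuousAdd G] (s : Set G) {t : Set G}
    (ht : IsOpen t) : IsOpen (s + t) := by
  rw [← Set.iUnion_add_left_image]
  refine isOpen_biUnion fun a _ => ?_
  rw [Set.image_eq_preimage_of_inverse (neg_add_cancel_left a) (add_neg_cancel_left a)]
  exact ht.preimage (continuous_const_add (-a))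

section PartialSums

variable (u : ℕ → Set G)

def partialSums : ℕ → Set G
  | 0 => u 1
  | n + 1 => partialSums n + u (n + 2)

variable {u}

theorem partialSums_add_subset (hgyr : ∀ n a b, gyr a b '' u n = u n)
    (hhalf : ∀ n, u (n + 1) + u (n + 1) ⊆ u n) (n : ℕ) : partialSums u n + u (n + 1) ⊆ u 0 := by
  induction n with
  | zero => exact hhalf 0
  | succ n ih =>
    calc partialSums u n + u (n + 2) + u (n + 2)
        = partialSums u n + (u (n + 2) + u (n + 2)) := add_add_assoc_of_gyr_image_eq (hgyr _)
      _ ⊆ partialSums u n + u (n + 1) := Set.add_subset_add_left (hhalf (n + 1))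
      _ ⊆ u 0 := ih

theorem zero_mem_partialSums (hzero : ∀ n, (0 : G) ∈ u n) (n : ℕ) : (0 : G) ∈ partialSums u n := by
  induction n with
  | zero => exact hzero 1
  | succ n ih => exact zero_add (0 : G) ▸ Set.add_mem_add ih (hzero (n + 2))

theorem iUnion_partialSums_subset (hgyr : ∀ n a b, gyr a b '' u n = u n)
    (hhalf : ∀ n, u (n + 1) + u (n + 1) ⊆ u n) (hzero : ∀ n, (0 : G) ∈ u n) :
    ⋃ n, partialSums u n ⊆ u 0 :=
  Set.iUnion_subset fun n => (Set.subset_add_left _ (hzero (n + 1))).trans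
    (partialSums_add_subset hgyr hhalf n)

variable [TopologicalSpace G]

theorem isOmegaGood_iUnion_partialSums (hopen : ∀ n, IsOpen (u n)) (hzero : ∀ n, (0 : G) ∈ u n) :
    IsOmegaGood (⋃ n, partialSums u n) := by
  refine ⟨Set.range u, Set.countable_range u, ?_, ?_⟩
  · rintro _ ⟨n, rfl⟩
    exact ⟨hopen n, hzero n⟩
  · intro x hx
    obtain ⟨n, hn⟩ := Set.mem_iUnion.mp hx
    refine ⟨u (n + 2), Set.mem_range_self _, ?_⟩
    calc {x} + u (n + 2) ⊆ partialSums u (n + 1) :=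
          Set.add_subset_add_right (Set.singleton_subset_iff.mpr hn)
      _ ⊆ ⋃ n, partialSums u n := Set.subset_iUnion _ _

theorem isOpen_partialSums [ContinuousAdd G] (hopen : ∀ n, IsOpen (u n)) :
    ∀ n, IsOpen (partialSums u n)
  | 0 => hopen 1
  | n + 1 => isOpen_add_left _ (hopen (n + 2))

end PartialSums

end Gyrogroup

/-- In a strongly paratopological gyrogroup (with gyr-invariant neighborhood base 𝒰 at 0),
there is a local base at the identity of ω-good sets: every neighborhood U of 0 contains
an open set V ∋ 0 admitting a countable family γ of open neighborhoods of 0 such that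
for each x ∈ V some W ∈ γ satisfies x⊕W ⊆ V. -/
theorem exists_omegaGood_base {G : Type*} [Gyrogroup G] [TopologicalSpace G]
    [ContinuousAdd G] (𝒰 : Set (Set G))
    (hopen : ∀ U ∈ 𝒰, IsOpen U)
    (hb : (nhds (0 : G)).HasBasis (· ∈ 𝒰) id)
    (hgyr : ∀ U ∈ 𝒰, ∀ x y : G, Gyrogroup.gyr x y '' U = U) :
    ∀ U ∈ nhds (0 : G), ∃ V : Set G, IsOpen V ∧ (0 : G) ∈ V ∧ V ⊆ U ∧
      ∃ γ : Set (Set G), γ.Countable ∧ (∀ W ∈ γ, IsOpen W ∧ (0 : G) ∈ W) ∧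
        ∀ x ∈ V, ∃ W ∈ γ, {x} + W ⊆ V := by
  intro U hU
  obtain ⟨U₀, hU₀, hU₀U⟩ := hb.mem_iff.mp hU
  obtain ⟨u, rfl, hmem, hhalf⟩ := hb.exists_seq_add_self_subset hU₀
  have hzero (n : ℕ) : (0 : G) ∈ u n := mem_of_mem_nhds (hb.mem_of_mem (hmem n))
  have hopen' (n : ℕ) : IsOpen (u n) := hopen _ (hmem n)
  refine ⟨⋃ n, Gyrogroup.partialSums u n,
    isOpen_iUnion (Gyrogroup.isOpen_partialSums hopen'),
    Set.mem_iUnion.mpr ⟨0, Gyrogroup.zero_mem_partialSums hzero 0⟩,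
    (Gyrogroup.iUnion_partialSums_subset (fun n => hgyr _ (hmem n)) hhalf hzero).trans hU₀U,
    Gyrogroup.isOmegaGood_iUnion_partialSums hopen' hzero⟩
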